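/- (Lemma 3: first-order identifiability with two words per document.) Let m = 2 and let θ ∈ Θ_{c_0} have pairwise distinct topic vectors θ_1,…,θ_K. Then 𝔡_{2,1}(θ) = 0 if and only if K ≥ 3. (In particular, for K = 2 and θ_1 ≠ θ_2 one has 𝔡_{2,1}(θ) > 0, while for every K ≥ 3 one has 𝔡_{2,1}(θ) = 0.) -/

import Mathlib

open MeasureTheory Filter

noncomputable section

namespace TopicModel

/-- The probability simplex in `ℝ^K`. -/
def simplex (K : ℕ) : Set (Fin K → ℝ) := {h | (∀ k, 0 ≤ h k) ∧ ∑ k, h k = 1}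

/-- The parameter set `Θ_{c₀}`: `K` topic vectors, each a probability vector on `[V]`
with all entries at least `c₀`. -/
def Theta (c0 : ℝ) (V K : ℕ) : Set (Fin K → Fin V → ℝ) :=
  {θ | (∀ k ℓ, c0 ≤ θ k ℓ) ∧ ∀ k, ∑ ℓ, θ k ℓ = 1}

/-- `θ` is a tuple of probability vectors. -/
def IsParam {V K : ℕ} (θ : Fin K → Fin V → ℝ) : Prop :=
  (∀ k ℓ, 0 ≤ θ k ℓ) ∧ ∀ k, ∑ ℓ, θ k ℓ = 1

/-- Word probability `p_{θ,h}(v) = Σ_k h_k θ_k(v)`. -/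
def pWord {V K : ℕ} (θ : Fin K → Fin V → ℝ) (h : Fin K → ℝ) (v : Fin V) : ℝ :=
  ∑ k, h k * θ k v

/-- Document probability given mixing vector `h`: `p_{θ,h}(x) = Π_i p_{θ,h}(x_i)`. -/
def pDoc {V K : ℕ} (m : ℕ) (θ : Fin K → Fin V → ℝ) (h : Fin K → ℝ)
    (x : Fin m → Fin V) : ℝ :=
  ∏ i, pWord θ h (x i)

/-- Marginal document probability `p_{θ,m}(x) = ∫ p_{θ,h}(x) dν₀(h)`. -/
def pM {V K : ℕ} (ν0 : Measure (Fin K → ℝ)) (m : ℕ) (θ : Fin K → Fin V → ℝ)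
    (x : Fin m → Fin V) : ℝ :=
  ∫ h, pDoc m θ h x ∂ν0

/-- `ℓ¹`-norm of a `K × V` array: `‖δ‖₁ = Σ_k Σ_ℓ |δ_k(ℓ)|`. -/
def norm1 {V K : ℕ} (δ : Fin K → Fin V → ℝ) : ℝ := ∑ k, ∑ ℓ, |δ k ℓ|

/-- Wasserstein distance between parameters:
`d_W(θ,θ') = min_π Σ_k ‖θ_k − θ'_{π(k)}‖₁`. -/
def dW {V K : ℕ} (θ θ' : Fin K → Fin V → ℝ) : ℝ :=
  ⨅ π : Equiv.Perm (Fin K), ∑ k, ∑ ℓ, |θ k ℓ - θ' (π k) ℓ|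

/-- `L¹` distance between the document pmfs of two parameters. -/
def distL1 {V K : ℕ} (ν0 : Measure (Fin K → ℝ)) (m : ℕ)
    (θ θ' : Fin K → Fin V → ℝ) : ℝ :=
  ∑ x : Fin m → Fin V, |pM ν0 m θ x - pM ν0 m θ' x|

/-- The `p`-th order degeneracy criterion `𝔡_{m,p}(θ)`: the infimum over all
`δ` with `‖δ‖₁ = 1` and `Σ_ℓ δ_k(ℓ) = 0` for every `k`, of
`Σ_{x ∈ [V]^m} |∫ p_{θ,h}(x) Σ_{i₁<⋯<i_p} Π_t (δ_h(x_{i_t}) / p_{θ,h}(x_{i_t})) dν₀|`. -/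
def degen {V K : ℕ} (ν0 : Measure (Fin K → ℝ)) (m : ℕ) (θ : Fin K → Fin V → ℝ)
    (p : ℕ) : ℝ :=
  sInf {r : ℝ | ∃ δ : Fin K → Fin V → ℝ, norm1 δ = 1 ∧ (∀ k, ∑ ℓ, δ k ℓ = 0) ∧
    r = ∑ x : Fin m → Fin V,
      |∫ h, pDoc m θ h x *
        ∑ S ∈ Finset.powersetCard p (Finset.univ : Finset (Fin m)),
          ∏ i ∈ S, ((∑ k, h k * δ k (x i)) / pWord θ h (x i)) ∂ν0|}

/-- The order of degeneracy `𝔭(m;θ) ∈ ℕ ∪ {∞}`: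
the least `p ∈ {1,…,m}` with `𝔡_{m,p}(θ) > 0`, or `∞` if none exists. -/
def pOrder {V K : ℕ} (ν0 : Measure (Fin K → ℝ)) (m : ℕ) (θ : Fin K → Fin V → ℝ) : ℕ∞ :=
  sInf ((↑) '' {p : ℕ | 1 ≤ p ∧ p ≤ m ∧ 0 < degen ν0 m θ p})

/-- Assumption (A2) on the mixing measure `ν₀`: a Borel probability measure supported on the
simplex, exchangeable, with `E[h₁²] > E[h₁h₂]` and (when `K ≥ 3`)
`E[h₁³] + 2E[h₁h₂h₃] > 3E[h₁²h₂]`. -/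
structure NiceMixing (K : ℕ) (ν0 : Measure (Fin K → ℝ)) : Prop where
  prob : IsProbabilityMeasure ν0
  support : ν0 (simplex K)ᶜ = 0
  exch : ∀ π : Equiv.Perm (Fin K), Measure.map (fun h => h ∘ π) ν0 = ν0
  mom2 : ∀ i j : Fin K, i ≠ j → ∫ h, h i * h j ∂ν0 < ∫ h, h i ^ 2 ∂ν0
  mom3 : ∀ i j k : Fin K, i ≠ j → j ≠ k → i ≠ k →
    3 * ∫ h, h i ^ 2 * h j ∂ν0 < ∫ h, h i ^ 3 ∂ν0 + 2 * ∫ h, h i * h j * h k ∂ν0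

/-- The equivalence class `Θ̃_{c₀}(θ)` of parameters inducing the same document pmf as `θ`. -/
def equivClass {V K : ℕ} (ν0 : Measure (Fin K → ℝ)) (m : ℕ) (c0 : ℝ)
    (θ : Fin K → Fin V → ℝ) : Set (Fin K → Fin V → ℝ) :=
  {θ' | θ' ∈ Theta c0 V K ∧ ∀ x : Fin m → Fin V, pM ν0 m θ' x = pM ν0 m θ x}

/-- Probability of the event `A` under `n` i.i.d. draws from the pmf `p` on a finite set. -/
def prodProb {α : Type*} [Fintype α] (p : α → ℝ) (n : ℕ) (A : Set (Fin n → α)) : ℝ :=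
  ∑ xs : Fin n → α, A.indicator (fun ys => ∏ i, p (ys i)) xs

end TopicModel

/-!
For two words the integrand of `𝔡_{2,1}` is `δ_h(v) p_{θ,h}(w) + p_{θ,h}(v) δ_h(w)`; its integral
depends on `ν₀` only through the second-moment matrix, which exchangeability makes
`b J + (a - b) I` with `a > b ≥ 0`. The constraint set being compact, `𝔡_{2,1}(θ) = 0` exactly when
some admissible `δ ≠ 0` makes `b (D ⊗ T + T ⊗ D) + (a - b) ∑ₖ (δₖ ⊗ θₖ + θₖ ⊗ δₖ)` vanish, where
`D = ∑ₖ δₖ` and `T = ∑ₖ θₖ`. Summing over the second word gives `(a + (K - 1) b) D = 0`, so `D = 0`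
and `∑ₖ δₖ ⊗ θₖ` must be antisymmetric. For `K = 2` this means `δ₁ = -δ₀` with `δ₀ ⊗ (θ₀ - θ₁)`
antisymmetric, which forces `δ = 0`; for `K ≥ 3` three distinct topics give a nonzero solution.
-/

lemma sInf_image_eq_zero_iff {X : Type*} [TopologicalSpace X] {s : Set X} {g : X → ℝ}
    (hs : IsCompact s) (hne : s.Nonempty) (hg : ContinuousOn g s) (hg0 : ∀ x ∈ s, 0 ≤ g x) :
    sInf (g '' s) = 0 ↔ ∃ x ∈ s, g x = 0 := by
  have hbdd : BddBelow (g '' s) := ⟨0, Set.forall_mem_image.2 hg0⟩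
  constructor
  · intro h
    simpa [h] using (hs.image_of_continuousOn hg).sInf_mem (hne.image g)
  · rintro ⟨x, hx, hgx⟩
    exact le_antisymm (hgx ▸ csInf_le hbdd (Set.mem_image_of_mem g hx))
      (le_csInf (hne.image g) (Set.forall_mem_image.2 hg0))

lemma eq_zero_of_forall_mul_add_mul_eq_zero {ι R : Type*} [Field R] [CharZero R] {φ u : ι → R}
    (hu : u ≠ 0) (h : ∀ v w, φ v * u w + u v * φ w = 0) : φ = 0 := by
  obtain ⟨w, hw⟩ := Function.ne_iff.mp hu
  rw [Pi.zero_apply] at hw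
  have hφw : φ w = 0 := by
    have : 2 * (φ w * u w) = 0 := by linear_combination h w w
    simpa [hw] using this
  funext v
  simpa [hφw, hw] using h v w

namespace TopicModel

section

variable {K V : ℕ}

lemma NiceMixing.ae_mem_simplex {ν0 : Measure (Fin K → ℝ)} (hν0 : NiceMixing K ν0) :
    ∀ᵐ h ∂ν0, h ∈ simplex K :=
  measure_eq_zero_iff_ae_notMem.mp hν0.support |>.mono fun _ h => not_not.mp h

lemma apply_le_one_of_mem_simplex {h : Fin K → ℝ} (hh : h ∈ simplex K) (k : Fin K) : h k ≤ 1 :=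
  hh.2 ▸ Finset.single_le_sum (fun l _ => hh.1 l) (Finset.mem_univ k)

lemma pWord_pos {θ : Fin K → Fin V → ℝ} (hθ : ∀ k ℓ, 0 < θ k ℓ) {h : Fin K → ℝ}
    (hh : h ∈ simplex K) (v : Fin V) : 0 < pWord θ h v := by
  obtain ⟨k, -, hk⟩ := Finset.exists_lt_of_sum_lt (by simp [hh.2] :
    ∑ _ : Fin K, (0 : ℝ) < ∑ k, h k)
  exact Finset.sum_pos' (fun j _ => mul_nonneg (hh.1 j) (hθ j v).le)
    ⟨k, Finset.mem_univ k, mul_pos hk (hθ k v)⟩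

lemma integrable_apply_mul_apply {ν0 : Measure (Fin K → ℝ)} [IsFiniteMeasure ν0]
    (hsupp : ∀ᵐ h ∂ν0, h ∈ simplex K) (k j : Fin K) :
    Integrable (fun h => h k * h j) ν0 := by
  refine .of_bound (by fun_prop) 1 ?_
  filter_upwards [hsupp] with h hh
  rw [Real.norm_eq_abs, abs_mul, abs_of_nonneg (hh.1 k), abs_of_nonneg (hh.1 j)]
  exact mul_le_one₀ (apply_le_one_of_mem_simplex hh k) (hh.1 j)
    (apply_le_one_of_mem_simplex hh j)

def secondMoment (ν0 : Measure (Fin K → ℝ)) (k j : Fin K) : ℝ := ∫ h, h k * h j ∂ν0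

lemma NiceMixing.secondMoment_perm {ν0 : Measure (Fin K → ℝ)} (hν0 : NiceMixing K ν0)
    (π : Equiv.Perm (Fin K)) (k j : Fin K) :
    secondMoment ν0 (π k) (π j) = secondMoment ν0 k j := by
  have hπ : Measurable fun h : Fin K → ℝ => h ∘ π := by fun_prop
  conv_rhs => rw [secondMoment, ← hν0.exch π, integral_map hπ.aemeasurable (by fun_prop)]
  rfl

lemma NiceMixing.secondMoment_eq_ite {ν0 : Measure (Fin K → ℝ)} (hν0 : NiceMixing K ν0)
    (hK : 2 ≤ K) : ∃ a b : ℝ, b < a ∧ 0 ≤ b ∧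
      secondMoment ν0 = fun k j => if k = j then a else b := by
  let i : Fin K := ⟨0, by omega⟩
  let i' : Fin K := ⟨1, by omega⟩
  have hii' : i ≠ i' := by simp [i, i', Fin.ext_iff]
  refine ⟨secondMoment ν0 i i, secondMoment ν0 i i', ?_, ?_, ?_⟩
  · simpa [secondMoment, pow_two] using hν0.mom2 i i' hii'
  · have := hν0.prob
    exact integral_nonneg_of_ae <| hν0.ae_mem_simplex.mono fun h hh => mul_nonneg (hh.1 i) (hh.1 i')
  · ext k j
    split_ifs with hkj
    · subst hkj
      simpa using hν0.secondMoment_perm (Equiv.swap i k) i i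
    · obtain ⟨π, hπi, hπi'⟩ := MulAction.is_two_pretransitive_iff.mp
        (Equiv.Perm.isMultiplyPretransitive (Fin K) 2) hii' hkj
      simpa [← hπi, ← hπi'] using hν0.secondMoment_perm π i i'

/-- The integral in `𝔡_{2,1}` at the document `(v, w)`, i.e.
`∫ (δ_h(v) p_{θ,h}(w) + p_{θ,h}(v) δ_h(w)) dν₀`, written through the second-moment matrix `M`
of `ν₀`. -/
def firstOrderTerm (M : Fin K → Fin K → ℝ) (θ δ : Fin K → Fin V → ℝ) (v w : Fin V) : ℝ :=
  ∑ k, ∑ j, M k j * (δ k v * θ j w + θ j v * δ k w)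

lemma pDoc_two_mul_sum_powersetCard_one {θ : Fin K → Fin V → ℝ} {h : Fin K → ℝ}
    (x : Fin 2 → Fin V) (h0 : pWord θ h (x 0) ≠ 0) (h1 : pWord θ h (x 1) ≠ 0)
    (δ : Fin K → Fin V → ℝ) :
    pDoc 2 θ h x * ∑ S ∈ Finset.powersetCard 1 (Finset.univ : Finset (Fin 2)),
        ∏ i ∈ S, ((∑ k, h k * δ k (x i)) / pWord θ h (x i))
      = ∑ k, ∑ j, h k * h j * (δ k (x 0) * θ j (x 1) + θ j (x 0) * δ k (x 1)) := by
  rw [Finset.powersetCard_one, Finset.sum_map]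
  simp only [Function.Embedding.coeFn_mk, Finset.prod_singleton, Fin.sum_univ_two, pDoc,
    Fin.prod_univ_two]
  field_simp
  simp only [pWord, Finset.sum_mul_sum, ← Finset.sum_add_distrib]
  rw [Finset.sum_comm]
  exact Finset.sum_congr rfl fun _ _ => Finset.sum_congr rfl fun _ _ => by ring

lemma integral_pDoc_two_mul_sum_powersetCard_one {ν0 : Measure (Fin K → ℝ)} [IsFiniteMeasure ν0]
    (hsupp : ∀ᵐ h ∂ν0, h ∈ simplex K) {θ : Fin K → Fin V → ℝ} (hθ : ∀ k ℓ, 0 < θ k ℓ)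
    (δ : Fin K → Fin V → ℝ) (x : Fin 2 → Fin V) :
    ∫ h, pDoc 2 θ h x * ∑ S ∈ Finset.powersetCard 1 (Finset.univ : Finset (Fin 2)),
        ∏ i ∈ S, ((∑ k, h k * δ k (x i)) / pWord θ h (x i)) ∂ν0
      = firstOrderTerm (secondMoment ν0) θ δ (x 0) (x 1) := by
  have hint (k j : Fin K) : Integrable (fun h : Fin K → ℝ =>
      h k * h j * (δ k (x 0) * θ j (x 1) + θ j (x 0) * δ k (x 1))) ν0 :=
    (integrable_apply_mul_apply hsupp k j).mul_const _
  rw [integral_congr_ae (hsupp.mono fun h hh => pDoc_two_mul_sum_powersetCard_one x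
    (pWord_pos hθ hh _).ne' (pWord_pos hθ hh _).ne' δ),
    integral_finsetSum _ fun k _ => integrable_finsetSum _ fun j _ => hint k j]
  refine Finset.sum_congr rfl fun k _ => ?_
  rw [integral_finsetSum _ fun j _ => hint k j]
  exact Finset.sum_congr rfl fun j _ => integral_mul_const _ _

lemma firstOrderTerm_smul (M : Fin K → Fin K → ℝ) (θ δ : Fin K → Fin V → ℝ) (c : ℝ)
    (v w : Fin V) : firstOrderTerm M θ (c • δ) v w = c * firstOrderTerm M θ δ v w := by
  simp only [firstOrderTerm, Finset.mul_sum, Pi.smul_apply, smul_eq_mul]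
  exact Finset.sum_congr rfl fun _ _ => Finset.sum_congr rfl fun _ _ => by ring

lemma firstOrderTerm_ite (a b : ℝ) (θ δ : Fin K → Fin V → ℝ) (v w : Fin V) :
    firstOrderTerm (fun k j => if k = j then a else b) θ δ v w
      = b * ((∑ k, δ k v) * ∑ k, θ k w + (∑ k, θ k v) * ∑ k, δ k w)
        + (a - b) * ∑ k, (δ k v * θ k w + θ k v * δ k w) := by
  have hM (k j : Fin K) : (if k = j then a else b) = b + if k = j then a - b else 0 := by
    split_ifs <;> ring
  have hDT : (∑ k, δ k v) * ∑ k, θ k w = ∑ k, ∑ j, δ k v * θ j w := Finset.sum_mul_sum _ _ _ _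
  have hTD : (∑ k, θ k v) * ∑ k, δ k w = ∑ k, ∑ j, θ j v * δ k w := by
    rw [Finset.sum_mul_sum, Finset.sum_comm]
  simp only [firstOrderTerm, hM, hDT, hTD, add_mul, ite_mul, zero_mul, Finset.sum_add_distrib,
    Finset.sum_ite_eq, Finset.mem_univ, if_true, mul_add, Finset.mul_sum]
  ring

/-- The constraint set of the degeneracy criteria `𝔡_{m,p}`. -/
def tangentSphere (K V : ℕ) : Set (Fin K → Fin V → ℝ) :=
  {δ | norm1 δ = 1 ∧ ∀ k, ∑ ℓ, δ k ℓ = 0}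

lemma continuous_norm1 : Continuous (norm1 : (Fin K → Fin V → ℝ) → ℝ) := by
  unfold norm1; fun_prop

lemma abs_le_norm1 (δ : Fin K → Fin V → ℝ) (k : Fin K) (ℓ : Fin V) : |δ k ℓ| ≤ norm1 δ :=
  (Finset.single_le_sum (f := fun ℓ => |δ k ℓ|) (fun _ _ => abs_nonneg _) (Finset.mem_univ ℓ)).trans
    (Finset.single_le_sum (f := fun k => ∑ ℓ, |δ k ℓ|)
      (fun _ _ => Finset.sum_nonneg fun _ _ => abs_nonneg _) (Finset.mem_univ k))

lemma norm1_smul (c : ℝ) (δ : Fin K → Fin V → ℝ) : norm1 (c • δ) = |c| * norm1 δ := by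
  simp [norm1, Finset.mul_sum, abs_mul]

lemma norm1_pos {δ : Fin K → Fin V → ℝ} (hδ : δ ≠ 0) : 0 < norm1 δ := by
  obtain ⟨k, ℓ, hkℓ⟩ : ∃ k ℓ, δ k ℓ ≠ 0 := by
    by_contra! h
    exact hδ (funext fun k => funext (h k))
  exact (abs_pos.2 hkℓ).trans_le (abs_le_norm1 δ k ℓ)

lemma isCompact_tangentSphere : IsCompact (tangentSphere K V) := by
  refine Metric.isCompact_of_isClosed_isBounded ?_ ((Metric.isBounded_closedBall (x := 0)
    (r := 1)).subset fun δ hδ => ?_)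
  · rw [tangentSphere, Set.ofPred_and, Set.ofPred_forall]
    exact (isClosed_eq continuous_norm1 continuous_const).inter
      (isClosed_iInter fun k => isClosed_eq (by fun_prop) continuous_const)
  · rw [mem_closedBall_zero_iff, pi_norm_le_iff_of_nonneg zero_le_one]
    intro k
    rw [pi_norm_le_iff_of_nonneg zero_le_one]
    exact fun ℓ => hδ.1 ▸ abs_le_norm1 δ k ℓ

lemma inv_norm1_smul_mem_tangentSphere {δ : Fin K → Fin V → ℝ} (hδ : δ ≠ 0)
    (hrow : ∀ k, ∑ ℓ, δ k ℓ = 0) : (norm1 δ)⁻¹ • δ ∈ tangentSphere K V := by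
  refine ⟨?_, fun k => ?_⟩
  · rw [norm1_smul, abs_inv, abs_of_pos (norm1_pos hδ), inv_mul_cancel₀ (norm1_pos hδ).ne']
  · simp [← Finset.mul_sum, hrow k]

lemma tangentSphere_nonempty (hK : 0 < K) (hV : 2 ≤ V) : (tangentSphere K V).Nonempty := by
  let j : Fin V := ⟨0, by omega⟩
  let j' : Fin V := ⟨1, by omega⟩
  have hjj' : j ≠ j' := by simp [j, j', Fin.ext_iff]
  let δ : Fin K → Fin V → ℝ := fun _ => Pi.single j 1 - Pi.single j' 1
  have hδ : δ ≠ 0 := fun h => by simpa [δ, hjj'] using congr_fun (congr_fun h ⟨0, hK⟩) j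
  exact ⟨_, inv_norm1_smul_mem_tangentSphere hδ fun k => by simp [δ, Finset.sum_sub_distrib]⟩

lemma degen_two_one_eq_zero_iff_exists {ν0 : Measure (Fin K → ℝ)} [IsFiniteMeasure ν0]
    (hsupp : ∀ᵐ h ∂ν0, h ∈ simplex K) {θ : Fin K → Fin V → ℝ} (hθ : ∀ k ℓ, 0 < θ k ℓ)
    (hne : (tangentSphere K V).Nonempty) :
    degen ν0 2 θ 1 = 0 ↔
      ∃ δ ∈ tangentSphere K V, ∀ v w, firstOrderTerm (secondMoment ν0) θ δ v w = 0 := by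
  let g δ := ∑ x : Fin 2 → Fin V, |firstOrderTerm (secondMoment ν0) θ δ (x 0) (x 1)|
  have hdegen : degen ν0 2 θ 1 = sInf (g '' tangentSphere K V) := by
    simp only [degen, integral_pDoc_two_mul_sum_powersetCard_one hsupp hθ]
    congr 1
    ext r
    simp [g, tangentSphere, eq_comm, and_assoc]
  have hg0 (δ) : g δ = 0 ↔ ∀ v w, firstOrderTerm (secondMoment ν0) θ δ v w = 0 := by
    simp only [g, Finset.sum_eq_zero_iff_of_nonneg fun (x : Fin 2 → Fin V) _ =>
      abs_nonneg (firstOrderTerm (secondMoment ν0) θ δ (x 0) (x 1)), Finset.mem_univ,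
      true_imp_iff, abs_eq_zero]
    exact ⟨fun h v w => by simpa using h ![v, w], fun h x => h _ _⟩
  rw [hdegen, sInf_image_eq_zero_iff isCompact_tangentSphere hne
    (by unfold firstOrderTerm; fun_prop) fun _ _ => Finset.sum_nonneg fun _ _ => abs_nonneg _]
  exact exists_congr fun δ => and_congr_right fun _ => hg0 δ

lemma sum_firstOrderTerm_ite_right {θ δ : Fin K → Fin V → ℝ} (hθ : ∀ k, ∑ ℓ, θ k ℓ = 1)
    (hδ : ∀ k, ∑ ℓ, δ k ℓ = 0) (a b : ℝ) (v : Fin V) :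
    ∑ w, firstOrderTerm (fun k j => if k = j then a else b) θ δ v w
      = (a - b + K * b) * ∑ k, δ k v := by
  have hT : ∑ w, ∑ k, θ k w = K := by rw [Finset.sum_comm]; simp [hθ]
  have hD : ∑ w, ∑ k, δ k w = 0 := by rw [Finset.sum_comm]; simp [hδ]
  have hS : ∑ w, ∑ k, (δ k v * θ k w + θ k v * δ k w) = ∑ k, δ k v := by
    rw [Finset.sum_comm]
    simp [Finset.sum_add_distrib, ← Finset.mul_sum, hθ, hδ]
  simp only [firstOrderTerm_ite]
  rw [Finset.sum_add_distrib, ← Finset.mul_sum, ← Finset.mul_sum, hS, Finset.sum_add_distrib,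
    ← Finset.mul_sum, ← Finset.mul_sum, hT, hD]
  ring

lemma eq_zero_of_firstOrderTerm_ite_eq_zero {a b : ℝ} (hba : b < a) (hb : 0 ≤ b)
    {θ δ : Fin 2 → Fin V → ℝ} (hθ : ∀ k, ∑ ℓ, θ k ℓ = 1) (hθ01 : θ 0 ≠ θ 1)
    (hδ : ∀ k, ∑ ℓ, δ k ℓ = 0)
    (h : ∀ v w, firstOrderTerm (fun k j => if k = j then a else b) θ δ v w = 0) : δ = 0 := by
  have hδ1 : δ 1 = -δ 0 := funext fun v => by
    have := sum_firstOrderTerm_ite_right hθ hδ a b v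
    simp only [h, Finset.sum_const_zero, Fin.sum_univ_two] at this
    have := (mul_eq_zero.1 this.symm).resolve_left (by push_cast; linarith)
    simp only [Pi.neg_apply]
    linarith
  have hδ0 : δ 0 = 0 := by
    refine eq_zero_of_forall_mul_add_mul_eq_zero (sub_ne_zero.2 hθ01) fun v w => ?_
    have := h v w
    simp only [firstOrderTerm_ite, Fin.sum_univ_two, hδ1, Pi.neg_apply] at this
    have hab : a - b ≠ 0 := sub_ne_zero.2 hba.ne'
    refine (mul_eq_zero.1 ?_).resolve_left hab
    simp only [Pi.sub_apply]
    linear_combination this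
  funext k
  fin_cases k
  · simp [hδ0]
  · simp [hδ1, hδ0]

lemma exists_firstOrderTerm_ite_eq_zero (hK : 3 ≤ K) {θ : Fin K → Fin V → ℝ}
    (hθ : ∀ k, ∑ ℓ, θ k ℓ = 1) (hdist : Function.Injective θ) (a b : ℝ) :
    ∃ δ ≠ 0, (∀ k, ∑ ℓ, δ k ℓ = 0) ∧
      ∀ v w, firstOrderTerm (fun k j => if k = j then a else b) θ δ v w = 0 := by
  let i : Fin K := ⟨0, by omega⟩
  let j : Fin K := ⟨1, by omega⟩
  let l : Fin K := ⟨2, by omega⟩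
  have hij : i ≠ j := by simp [i, j, Fin.ext_iff]
  have hil : i ≠ l := by simp [i, l, Fin.ext_iff]
  have hjl : j ≠ l := by simp [j, l, Fin.ext_iff]
  -- The cyclic choice makes `∑ k, δ k ⊗ θ k` antisymmetric and keeps `∑ k, δ k = 0`.
  let δ : Fin K → Fin V → ℝ :=
    Pi.single i (θ j - θ l) + Pi.single j (θ l - θ i) + Pi.single l (θ i - θ j)
  refine ⟨δ, fun h => ?_, fun k => ?_, fun v w => ?_⟩
  · exact hdist.ne hjl (sub_eq_zero.1 (by simpa [δ, hij, hil] using congr_fun h i))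
  · simp only [δ, Pi.add_apply, Pi.single_apply]
    split_ifs <;> simp [Finset.sum_sub_distrib, hθ]
  · have hcol (u : Fin V) : ∑ k, δ k u = 0 := by
      simp [δ, Finset.sum_add_distrib, Pi.single_apply, ite_apply]
    have hanti : ∑ k, (δ k v * θ k w + θ k v * δ k w) = 0 := by
      simp only [δ, Pi.add_apply, Pi.sub_apply, Pi.single_apply, ite_apply, Pi.zero_apply,
        add_mul, mul_add, ite_mul, mul_ite, zero_mul, mul_zero, Finset.sum_add_distrib,
        Finset.sum_ite_eq', Finset.mem_univ, if_true]
      ring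
    rw [firstOrderTerm_ite, hcol v, hcol w, hanti]
    ring

end

/-- **Lemma 3 (first-order identifiability with two words per document).**
If `m = 2` and the topic vectors are pairwise distinct, then `𝔡_{2,1}(θ) = 0` if and only if
`K ≥ 3`. -/
theorem degen_two_one_eq_zero_iff
    {V K : ℕ} (hV : 2 ≤ V) (hK : 2 ≤ K) {c0 : ℝ} (hc0 : 0 < c0)
    (ν0 : Measure (Fin K → ℝ)) (hν0 : NiceMixing K ν0)
    (θ : Fin K → Fin V → ℝ) (hθ : θ ∈ Theta c0 V K)
    (hdist : Function.Injective θ) :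
    degen ν0 2 θ 1 = 0 ↔ 3 ≤ K := by
  have := hν0.prob
  obtain ⟨a, b, hba, hb, hM⟩ := hν0.secondMoment_eq_ite hK
  rw [degen_two_one_eq_zero_iff_exists hν0.ae_mem_simplex (fun k ℓ => hc0.trans_le (hθ.1 k ℓ))
    (tangentSphere_nonempty (by omega) hV), hM]
  constructor
  · rintro ⟨δ, hδ, hδ0⟩
    by_contra! hK3
    obtain rfl : K = 2 := by omega
    have := eq_zero_of_firstOrderTerm_ite_eq_zero hba hb hθ.2 (hdist.ne (by decide)) hδ.2 hδ0
    simp [this, tangentSphere, norm1] at hδ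
  · intro hK3
    obtain ⟨δ, hδ, hrow, hδ0⟩ := exists_firstOrderTerm_ite_eq_zero hK3 hθ.2 hdist a b
    exact ⟨_, inv_norm1_smul_mem_tangentSphere hδ hrow, fun v w => by
      rw [firstOrderTerm_smul, hδ0, mul_zero]⟩

end TopicModel
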